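/- arXiv:2012.06394 — 5 statements merged into one kernel-verified Lean document; each statement's English description precedes it below -/
import Mathlib

section
/- Let β₀ + Σ_{j=1}^n β_j x_j + β′ y ≥ 0 be a core facet of conv(G). Then the sets {k ∈ {0,…,n−1} : L_k(β₀,β) + β′·m(x^k) = 0} and {k ∈ {1,…,n} : L_k(β₀,β) + β′·m(x^k) = 0} are nonempty, and, letting r be the minimum of the first set and s the maximum of the second set, one has β_1 = β_2 = … = β_{r+1} and β_s = β_{s+1} = … = β_n. -/
open Finset

/-- The symmetric multilinear polynomial `m(x) = ∑_{i=2}^n c_i ∑_{|J|=i} ∏_{j∈J} x_j`. -/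
noncomputable def mPoly (n : ℕ) (c : ℕ → ℝ) (x : Fin n → ℝ) : ℝ :=
  ∑ i ∈ Finset.Icc 2 n, c i *
    ∑ J ∈ Finset.powersetCard i (Finset.univ : Finset (Fin n)), ∏ j ∈ J, x j

/-- The box `X = [ℓ,u]^n`. -/
def Xbox (n : ℕ) (ℓ u : ℝ) : Set (Fin n → ℝ) :=
  {x | ∀ j, x j ∈ Set.Icc ℓ u}

/-- The graph `G = {(x,y) : x ∈ X, y = m(x)}`. -/
def Gset (n : ℕ) (ℓ u : ℝ) (c : ℕ → ℝ) : Set ((Fin n → ℝ) × ℝ) :=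
  {p | p.1 ∈ Xbox n ℓ u ∧ p.2 = mPoly n c p.1}

/-- The point `x^k` whose first `k` coordinates are `u` and remaining ones are `ℓ`. -/
def xpt (n : ℕ) (ℓ u : ℝ) (k : ℕ) : Fin n → ℝ :=
  fun j => if (j : ℕ) < k then u else ℓ

/-- `m(x^k)`. -/
noncomputable def mval (n : ℕ) (ℓ u : ℝ) (c : ℕ → ℝ) (k : ℕ) : ℝ :=
  mPoly n c (xpt n ℓ u k)

/-- `L_k(β₀,β) = β₀ + u ∑_{j=1}^k β_j + ℓ ∑_{j=k+1}^n β_j`. -/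
noncomputable def Lk (n : ℕ) (ℓ u : ℝ) (β₀ : ℝ) (β : Fin n → ℝ) (k : ℕ) : ℝ :=
  β₀ + u * ∑ j ∈ Finset.univ.filter (fun j : Fin n => (j : ℕ) < k), β j
     + ℓ * ∑ j ∈ Finset.univ.filter (fun j : Fin n => k ≤ (j : ℕ)), β j

/-- The left-hand side `β₀ + ∑_j β_j x_j + β′ y` of an inequality, at the point `p = (x,y)`. -/
noncomputable def ineqLhs (n : ℕ) (β₀ : ℝ) (β : Fin n → ℝ) (β' : ℝ)
    (p : (Fin n → ℝ) × ℝ) : ℝ :=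
  β₀ + ∑ j, β j * p.1 j + β' * p.2

/-- A core inequality: `β′ ∈ {1,-1}` and nondecreasing coefficients `β₁ ≤ … ≤ βₙ`. -/
def IsCore (n : ℕ) (β : Fin n → ℝ) (β' : ℝ) : Prop :=
  (β' = 1 ∨ β' = -1) ∧ Monotone β

/-- Validity of the inequality `β₀ + ∑_j β_j x_j + β′ y ≥ 0` on `conv(G)`. -/
def IsValid (n : ℕ) (ℓ u : ℝ) (c : ℕ → ℝ) (β₀ : ℝ) (β : Fin n → ℝ) (β' : ℝ) : Prop :=
  ∀ p ∈ convexHull ℝ (Gset n ℓ u c), 0 ≤ ineqLhs n β₀ β β' p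

/-- The point `p` satisfies the inequality exactly (with equality). -/
def ExactAt (n : ℕ) (β₀ : ℝ) (β : Fin n → ℝ) (β' : ℝ) (p : (Fin n → ℝ) × ℝ) : Prop :=
  ineqLhs n β₀ β β' p = 0

/-- Facet-defining: there are `n+1` affinely independent points of `conv(G)`
satisfying the inequality exactly. -/
def IsFacet (n : ℕ) (ℓ u : ℝ) (c : ℕ → ℝ) (β₀ : ℝ) (β : Fin n → ℝ) (β' : ℝ) : Prop :=
  ∃ pts : Fin (n + 1) → (Fin n → ℝ) × ℝ,
    AffineIndependent ℝ pts ∧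
    ∀ i, pts i ∈ convexHull ℝ (Gset n ℓ u c) ∧ ExactAt n β₀ β β' (pts i)

/-- The point `(x^k, m(x^k))` of `G`. -/
noncomputable def vtx (n : ℕ) (ℓ u : ℝ) (c : ℕ → ℝ) (k : ℕ) : (Fin n → ℝ) × ℝ :=
  (xpt n ℓ u k, mval n ℓ u c k)

/-!
Write `slack x = β₀ + ∑ β_j x_j + β′ m(x)` for the left-hand side at the graph point `(x, m(x))`.
It is nonnegative on the box and affine in each coordinate, so at a zero `x` every coordinate
can be pushed to an endpoint without leaving the zeros: to `ℓ` unless it equals `u`, or to `u`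
unless it equals `ℓ`. As `m` is symmetric, at the vertex with `u`-coordinates `T` the slack is
the slack at `x^{|T|}` plus `(u - ℓ)(∑_T β - ∑_{j < |T|} β)`, two nonnegative terms; hence
`x^{|T|}` is a zero and `T` has minimal `β`-weight among the sets of its size.

The `n + 1` affinely independent tight points of a facet cannot all lie in a hyperplane
`x_j = v`. For `x_1 = u` this gives a tight point whose set `T` of `u`-coordinates misses
index `1`. A set of minimal weight is comparable under inclusion with the block of indices `i`
with `β_i = β_1`, so `T` is strictly smaller than that block, and the zero vertex `x^{|T|}`
bounds `r`. Symmetrically, `x_n = ℓ`, the set of coordinates `≠ ℓ` and the block of `β_n`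
bound `s`.
-/

open Function

lemma sum_le_sum_of_card_eq_of_forall_le {α : Type*} {f : α → ℝ} {A B : Finset α}
    (hAB : #A = #B) (hf : ∀ a ∈ A, ∀ b ∈ B, f a ≤ f b) : ∑ a ∈ A, f a ≤ ∑ b ∈ B, f b := by
  rcases A.eq_empty_or_nonempty with rfl | hA
  · simp [card_eq_zero.1 hAB.symm]
  calc ∑ a ∈ A, f a ≤ #A • A.sup' hA f := sum_le_card_nsmul _ _ _ fun a ha => le_sup' f ha
    _ = #B • A.sup' hA f := by rw [hAB]
    _ ≤ ∑ b ∈ B, f b :=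
      card_nsmul_le_sum _ _ _ fun b hb => sup'_le hA f fun a ha => hf a ha b hb

lemma subset_or_subset_of_forall_lt {α : Type*} [DecidableEq α] {f : α → ℝ} {T L : Finset α}
    (hmin : ∀ T' : Finset α, #T' = #T → ∑ i ∈ T, f i ≤ ∑ i ∈ T', f i)
    (hL : ∀ a ∈ L, ∀ b ∉ L, f a < f b) : L ⊆ T ∨ T ⊆ L := by
  by_contra! h
  obtain ⟨a, haL, haT⟩ := not_subset.1 h.1
  obtain ⟨b, hbT, hbL⟩ := not_subset.1 h.2
  -- exchanging `b` for `a` would lower the weight of `T`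
  have ha : a ∉ T.erase b := fun h => haT (mem_of_mem_erase h)
  have hswap := hmin (insert a (T.erase b))
    (by rw [card_insert_of_notMem ha, card_erase_add_one hbT])
  rw [sum_insert ha, ← add_sum_erase T f hbT] at hswap
  linarith [hL a haL b hbL]

section InitialSegment

variable {n : ℕ} {β : Fin n → ℝ}

lemma card_filter_val_lt_card (T : Finset (Fin n)) :
    #(univ.filter fun j : Fin n => (j : ℕ) < #T) = #T := by
  rw [Fin.card_filter_val_lt]
  exact min_eq_right (card_le_univ T |>.trans_eq (Fintype.card_fin n))

lemma sum_filter_val_lt_card_le (hβ : Monotone β) (T : Finset (Fin n)) :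
    ∑ j ∈ univ.filter (fun j : Fin n => (j : ℕ) < #T), β j ≤ ∑ j ∈ T, β j := by
  rw [← sub_nonneg, ← sum_sdiff_sub_sum_sdiff, sub_nonneg]
  refine sum_le_sum_of_card_eq_of_forall_le (card_sdiff_comm (card_filter_val_lt_card T))
    fun a ha b hb => hβ ?_
  simp only [mem_sdiff, mem_filter, mem_univ, true_and, not_lt] at ha hb
  exact Fin.le_def.2 (by omega)

lemma card_filter_le_le_of_lt (hβ : Monotone β) {i₀ i : Fin n} (h : β i₀ < β i) :
    #(univ.filter fun a => β a ≤ β i₀) ≤ i := by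
  refine (card_le_card fun a ha => mem_Iio.2 (not_le.1 fun hia => ?_)).trans_eq (Fin.card_Iio i)
  exact (h.trans_le (hβ hia)).not_ge (mem_filter.1 ha).2

lemma le_card_filter_lt_of_lt (hβ : Monotone β) {j i₀ : Fin n} (h : β j < β i₀) :
    (j : ℕ) + 1 ≤ #(univ.filter fun a => β a < β i₀) :=
  (Fin.card_Iic j).symm.trans_le <| card_le_card fun a ha =>
    mem_filter.2 ⟨mem_univ a, (hβ (mem_Iic.1 ha)).trans_lt h⟩

end InitialSegment

lemma mem_of_mem_convexHull_of_eq_zero {E : Type*} [AddCommGroup E] [Module ℝ E]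
    {s K : Set E} (f : E →ᵃ[ℝ] ℝ) (hK : Convex ℝ K) (hf : ∀ p ∈ s, 0 ≤ f p)
    (hsK : ∀ p ∈ s, f p = 0 → p ∈ K) {p : E} (hp : p ∈ convexHull ℝ s) (h0 : f p = 0) :
    p ∈ K := by
  let C : Set E := {p | 0 ≤ f p ∧ (f p = 0 → p ∈ K)}
  have hC : Convex ℝ C := by
    intro p ⟨hp, hpK⟩ q ⟨hq, hqK⟩ a b ha hb hab
    rw [Set.mem_ofPred_eq, Convex.combo_affine_apply hab, smul_eq_mul, smul_eq_mul]
    refine ⟨by positivity, fun h => ?_⟩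
    rcases ha.eq_or_lt with rfl | ha
    · simpa [show b = 1 by linarith] using hqK (by simpa [show b = 1 by linarith] using h)
    rcases hb.eq_or_lt with rfl | hb
    · simpa [show a = 1 by linarith] using hpK (by simpa [show a = 1 by linarith] using h)
    exact hK (hpK (by nlinarith)) (hqK (by nlinarith)) ha.le hb.le hab
  exact (convexHull_min (t := C) (fun q hq => ⟨hf q hq, hsK q hq⟩) hC hp).2 h0

lemma finrank_vectorSpan_add_finrank_range_le {K ι E F : Type*} [Field K] [AddCommGroup E]
    [Module K E] [FiniteDimensional K E] [AddCommGroup F] [Module K F] (p : ι → E)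
    (Φ : E →ₗ[K] F) (hΦ : ∀ i j, Φ (p i) = Φ (p j)) :
    Module.finrank K (vectorSpan K (Set.range p)) + Module.finrank K (LinearMap.range Φ) ≤
      Module.finrank K E := by
  have hker : vectorSpan K (Set.range p) ≤ LinearMap.ker Φ := by
    rw [vectorSpan_def, Submodule.span_le]
    rintro _ ⟨_, ⟨i, rfl⟩, _, ⟨j, rfl⟩, rfl⟩
    simp [hΦ i j]
  rw [← LinearMap.finrank_range_add_finrank_ker Φ, add_comm]
  exact Nat.add_le_add_left (Submodule.finrank_mono hker) _

lemma comp_mem_of_forall_update_mem {ι α : Type*} [Fintype ι] [DecidableEq ι]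
    {Z : Set (ι → α)} (g : α → α) (hZ : ∀ x ∈ Z, ∀ j, update x j (g (x j)) ∈ Z)
    {x : ι → α} (hx : x ∈ Z) : g ∘ x ∈ Z := by
  suffices h : ∀ s : Finset ι, (fun i => if i ∈ s then g (x i) else x i) ∈ Z by
    simpa [comp_def] using h univ
  intro s
  induction s using Finset.induction with
  | empty => simpa using hx
  | insert j s hj ih =>
    convert hZ _ ih j using 1
    funext i
    by_cases hij : i = j
    · subst hij; simp [hj]
    · simp [hij]

lemma prod_update_eq {ι R : Type*} [DecidableEq ι] [CommRing R] (x : ι → R) (j : ι) (t : R)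
    (J : Finset ι) :
    ∏ i ∈ J, update x j t i =
      ∏ i ∈ J, update x j 0 i + t * (∏ i ∈ J, update x j 1 i - ∏ i ∈ J, update x j 0 i) := by
  by_cases hj : j ∈ J
  · simp only [prod_update_of_mem hj]; ring
  · simp only [prod_update_of_notMem hj]; ring

def boxVertex (n : ℕ) (ℓ u : ℝ) (T : Finset (Fin n)) : Fin n → ℝ :=
  fun i => if i ∈ T then u else ℓ

noncomputable def slack (n : ℕ) (c : ℕ → ℝ) (β₀ : ℝ) (β : Fin n → ℝ) (β' : ℝ)
    (x : Fin n → ℝ) : ℝ :=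
  ineqLhs n β₀ β β' (x, mPoly n c x)

section Slack

variable {n : ℕ} {ℓ u : ℝ} {c : ℕ → ℝ} {β₀ : ℝ} {β : Fin n → ℝ} {β' : ℝ}

lemma mPoly_comp_perm (c : ℕ → ℝ) (x : Fin n → ℝ) (σ : Equiv.Perm (Fin n)) :
    mPoly n c (x ∘ σ) = mPoly n c x := by
  simp only [mPoly, ← Finset.esymm_map_val]
  conv_rhs => rw [← map_univ_equiv σ, map_val, Multiset.map_map]
  rfl

lemma mPoly_boxVertex_of_card_eq (c : ℕ → ℝ) (ℓ u : ℝ) {T T' : Finset (Fin n)}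
    (h : #T = #T') : mPoly n c (boxVertex n ℓ u T) = mPoly n c (boxVertex n ℓ u T') := by
  let σ := (equivOfCardEq h).extendSubtype
  have hσ : boxVertex n ℓ u T' ∘ σ = boxVertex n ℓ u T := by
    funext i
    by_cases hi : i ∈ T
    · simp [boxVertex, hi, (equivOfCardEq h).extendSubtype_mem i hi, σ]
    · simp [boxVertex, hi, (equivOfCardEq h).extendSubtype_not_mem i hi, σ]
  rw [← hσ, mPoly_comp_perm]

lemma mPoly_update_eq (c : ℕ → ℝ) (x : Fin n → ℝ) (j : Fin n) (t : ℝ) :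
    mPoly n c (update x j t) = mPoly n c (update x j 0) +
      t * (mPoly n c (update x j 1) - mPoly n c (update x j 0)) := by
  simp only [mPoly, prod_update_eq x j t, sum_add_distrib, ← mul_sum, sum_sub_distrib, mul_add,
    mul_sub, mul_left_comm (c _) t]

lemma sum_mul_boxVertex (β : Fin n → ℝ) (ℓ u : ℝ) (T : Finset (Fin n)) :
    ∑ j, β j * boxVertex n ℓ u T j = ℓ * ∑ j, β j + (u - ℓ) * ∑ j ∈ T, β j := by
  have h : ∀ j, β j * boxVertex n ℓ u T j = ℓ * β j + if j ∈ T then (u - ℓ) * β j else 0 := by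
    intro j; by_cases hj : j ∈ T <;> simp [boxVertex, hj] <;> ring
  simp only [h, sum_add_distrib, sum_ite_mem, univ_inter, mul_sum]

lemma boxVertex_mem_Xbox (hℓu : ℓ ≤ u) (T : Finset (Fin n)) :
    boxVertex n ℓ u T ∈ Xbox n ℓ u := by
  intro j
  by_cases hj : j ∈ T <;> simp [boxVertex, hj, hℓu]

lemma xpt_eq_boxVertex (k : ℕ) :
    xpt n ℓ u k = boxVertex n ℓ u (univ.filter fun j : Fin n => (j : ℕ) < k) := by
  funext j
  simp [xpt, boxVertex]

lemma update_mem_Xbox {x : Fin n → ℝ} (hx : x ∈ Xbox n ℓ u) (j : Fin n) {t : ℝ}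
    (ht : t ∈ Set.Icc ℓ u) : update x j t ∈ Xbox n ℓ u := by
  intro i
  by_cases hij : i = j
  · subst hij; simpa using ht
  · simpa [hij] using hx i

lemma Lk_add_mul_mval (k : ℕ) :
    Lk n ℓ u β₀ β k + β' * mval n ℓ u c k = slack n c β₀ β β' (xpt n ℓ u k) := by
  simp only [slack, ineqLhs, Lk, mval, xpt, mul_ite, sum_ite, mul_sum, not_lt]
  simp only [mul_comm u, mul_comm ℓ]
  ring

lemma slack_nonneg (hvalid : IsValid n ℓ u c β₀ β β') {x : Fin n → ℝ}
    (hx : x ∈ Xbox n ℓ u) : 0 ≤ slack n c β₀ β β' x :=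
  hvalid _ (subset_convexHull ℝ _ ⟨hx, rfl⟩)

lemma exists_slack_update_eq (x : Fin n → ℝ) (j : Fin n) :
    ∃ A B : ℝ, ∀ t, slack n c β₀ β β' (update x j t) = A + t * B := by
  have hlin : ∀ t i, β i * update x j t i =
      β i * update x j 0 i + t * (β i * update x j 1 i - β i * update x j 0 i) := by
    intro t i
    by_cases hij : i = j
    · subst hij; simp [mul_comm]
    · simp [hij]
  refine ⟨slack n c β₀ β β' (update x j 0),
    slack n c β₀ β β' (update x j 1) - slack n c β₀ β β' (update x j 0), fun t => ?_⟩
  simp only [slack, ineqLhs, hlin t, mPoly_update_eq c x j t, sum_add_distrib, ← mul_sum,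
    sum_sub_distrib]
  ring

lemma slack_update_eq_zero (hvalid : IsValid n ℓ u c β₀ β β') {x : Fin n → ℝ}
    (hx : x ∈ Xbox n ℓ u) (h0 : slack n c β₀ β β' x = 0) {j : Fin n} (hℓ : ℓ < x j)
    (hu : x j < u) :
    slack n c β₀ β β' (update x j ℓ) = 0 ∧ slack n c β₀ β β' (update x j u) = 0 := by
  have hxℓ := slack_nonneg hvalid (update_mem_Xbox hx j ⟨le_rfl, (hℓ.trans hu).le⟩)
  have hxu := slack_nonneg hvalid (update_mem_Xbox hx j ⟨(hℓ.trans hu).le, le_rfl⟩)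
  obtain ⟨A, B, hAB⟩ := exists_slack_update_eq (c := c) (β₀ := β₀) (β := β) (β' := β') x j
  rw [← update_eq_self j x] at h0
  simp only [hAB] at h0 hxℓ hxu ⊢
  constructor <;> nlinarith

lemma slack_comp_eq_zero (hvalid : IsValid n ℓ u c β₀ β β') (g : ℝ → ℝ) (hgℓ : g ℓ = ℓ)
    (hgu : g u = u) (hg : ∀ t, g t = ℓ ∨ g t = u) {x : Fin n → ℝ} (hx : x ∈ Xbox n ℓ u)
    (h0 : slack n c β₀ β β' x = 0) : slack n c β₀ β β' (g ∘ x) = 0 := by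
  refine (comp_mem_of_forall_update_mem (Z := {x | x ∈ Xbox n ℓ u ∧ slack n c β₀ β β' x = 0})
    g (fun x ⟨hx, h0⟩ j => ?_) ⟨hx, h0⟩).2
  obtain ⟨hℓ, hu⟩ := hx j
  rcases hℓ.eq_or_lt with hℓ | hℓ
  · rw [show g (x j) = x j from hℓ ▸ hgℓ, update_eq_self]; exact ⟨hx, h0⟩
  rcases hu.eq_or_lt with hu | hu
  · rw [show g (x j) = x j from hu ▸ hgu, update_eq_self]; exact ⟨hx, h0⟩
  have hg' : g (x j) ∈ Set.Icc ℓ u := by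
    rcases hg (x j) with h | h <;> rw [h] <;> constructor <;> linarith
  refine ⟨update_mem_Xbox hx j hg', ?_⟩
  rcases hg (x j) with h | h <;> rw [h]
  exacts [(slack_update_eq_zero hvalid hx h0 hℓ hu).1, (slack_update_eq_zero hvalid hx h0 hℓ hu).2]

lemma slack_boxVertex_of_card_eq {T T' : Finset (Fin n)} (h : #T = #T') :
    slack n c β₀ β β' (boxVertex n ℓ u T') =
      slack n c β₀ β β' (boxVertex n ℓ u T) + (u - ℓ) * (∑ j ∈ T', β j - ∑ j ∈ T, β j) := by
  simp only [slack, ineqLhs, sum_mul_boxVertex, mPoly_boxVertex_of_card_eq c ℓ u h]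
  ring

lemma sum_le_sum_of_slack_boxVertex_eq_zero (hvalid : IsValid n ℓ u c β₀ β β') (hℓu : ℓ < u)
    {T : Finset (Fin n)} (h0 : slack n c β₀ β β' (boxVertex n ℓ u T) = 0)
    (T' : Finset (Fin n)) (hT' : #T' = #T) : ∑ j ∈ T, β j ≤ ∑ j ∈ T', β j := by
  have := slack_nonneg hvalid (boxVertex_mem_Xbox hℓu.le T')
  rw [slack_boxVertex_of_card_eq hT'.symm, h0, zero_add] at this
  exact sub_nonneg.1 (nonneg_of_mul_nonneg_right (by linarith) (sub_pos.2 hℓu))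

lemma slack_xpt_card_eq_zero (hvalid : IsValid n ℓ u c β₀ β β') (hℓu : ℓ < u)
    (hβ : Monotone β) {T : Finset (Fin n)} (h0 : slack n c β₀ β β' (boxVertex n ℓ u T) = 0) :
    slack n c β₀ β β' (xpt n ℓ u #T) = 0 := by
  have hle := sum_filter_val_lt_card_le hβ T
  have hnn := slack_nonneg (c := c) hvalid
    (boxVertex_mem_Xbox hℓu.le (univ.filter fun j : Fin n => (j : ℕ) < #T))
  rw [xpt_eq_boxVertex]
  rw [slack_boxVertex_of_card_eq (card_filter_val_lt_card T).symm, h0, zero_add] at hnn ⊢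
  nlinarith

lemma exists_slack_eq_zero_ne (hvalid : IsValid n ℓ u c β₀ β β')
    (hfacet : IsFacet n ℓ u c β₀ β β') (hβ' : β' ≠ 0) (j₀ : Fin n) (v : ℝ) :
    ∃ x ∈ Xbox n ℓ u, slack n c β₀ β β' x = 0 ∧ x j₀ ≠ v := by
  by_contra! h
  obtain ⟨pts, hind, hpts⟩ := hfacet
  let L : ((Fin n → ℝ) × ℝ) →ₗ[ℝ] ℝ :=
    (Fintype.linearCombination ℝ β).coprod (β' • LinearMap.id)
  have hL : ∀ p, ineqLhs n β₀ β β' p = β₀ + L p := fun p => by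
    simp [L, ineqLhs, Fintype.linearCombination_apply, mul_comm, add_assoc]
  let f := L.toAffineMap + AffineMap.const ℝ ((Fin n → ℝ) × ℝ) β₀
  have hf : ∀ p, f p = ineqLhs n β₀ β β' p := fun p => by simp [f, hL, add_comm]
  -- all `n + 1` points lie in the affine subspace `Φ = (v, -β₀)`, of dimension `n - 1`
  let Φ := ((LinearMap.proj j₀).comp (LinearMap.fst ℝ (Fin n → ℝ) ℝ)).prod L
  have hΦ : ∀ i, Φ (pts i) = (v, -β₀) := by
    refine fun i => mem_of_mem_convexHull_of_eq_zero (K := {p | Φ p = (v, -β₀)}) f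
      (convex_hyperplane Φ.isLinear _) (fun p hp => ?_) (fun p hp h0 => ?_) (hpts i).1
      ((hf _).trans (hpts i).2)
    · exact (hf p).symm ▸ hvalid p (subset_convexHull ℝ _ hp)
    · obtain ⟨p, y⟩ := p
      obtain ⟨hp, hy⟩ := hp
      dsimp only at hp hy
      subst hy
      rw [hf, hL] at h0
      refine Prod.ext (h p hp ?_) (by simp [Φ]; linarith)
      rw [slack, hL, h0]
  have hrange : LinearMap.range Φ = ⊤ := by
    refine LinearMap.range_eq_top.2 fun ⟨a, b⟩ => ⟨(Pi.single j₀ a, (b - β j₀ * a) / β'), ?_⟩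
    simp [Φ, L, Fintype.linearCombination_apply_single, mul_div_cancel₀ _ hβ']
    ring
  have := finrank_vectorSpan_add_finrank_range_le pts Φ fun i j => by rw [hΦ, hΦ]
  rw [hind.finrank_vectorSpan (Fintype.card_fin _), hrange, finrank_top] at this
  simp at this

lemma exists_slack_xpt_eq_zero_lt_card (hvalid : IsValid n ℓ u c β₀ β β')
    (hfacet : IsFacet n ℓ u c β₀ β β') (hβ' : β' ≠ 0) (hℓu : ℓ < u) (hβ : Monotone β)
    (i₀ : Fin n) :
    ∃ k, slack n c β₀ β β' (xpt n ℓ u k) = 0 ∧ k < #(univ.filter fun a => β a ≤ β i₀) := by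
  obtain ⟨x, hx, h0, hne⟩ := exists_slack_eq_zero_ne hvalid hfacet hβ' i₀ u
  set T := univ.filter fun i => x i = u
  have hT : slack n c β₀ β β' (boxVertex n ℓ u T) = 0 := by
    convert slack_comp_eq_zero hvalid (fun t => if t = u then u else ℓ) (if_neg hℓu.ne)
      (if_pos rfl) (fun t => by split_ifs <;> simp) hx h0 using 2
    funext i
    simp [boxVertex, T]
  refine ⟨#T, slack_xpt_card_eq_zero hvalid hℓu hβ hT, not_le.1 fun hcard => hne ?_⟩
  set L := univ.filter fun a => β a ≤ β i₀
  have hL : ∀ a ∈ L, ∀ b ∉ L, β a < β b := fun a ha b hb => by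
    simp only [L, mem_filter, mem_univ, true_and, not_le] at ha hb
    linarith
  have hi₀ : i₀ ∈ L := by simp [L]
  have : i₀ ∈ T :=
    (subset_or_subset_of_forall_lt (sum_le_sum_of_slack_boxVertex_eq_zero hvalid hℓu hT) hL).elim
      (· hi₀) fun h => (eq_of_subset_of_card_le h hcard).symm ▸ hi₀
  simpa [T] using this

lemma exists_slack_xpt_eq_zero_card_lt (hvalid : IsValid n ℓ u c β₀ β β')
    (hfacet : IsFacet n ℓ u c β₀ β β') (hβ' : β' ≠ 0) (hℓu : ℓ < u) (hβ : Monotone β)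
    (i₀ : Fin n) :
    ∃ k ≤ n, slack n c β₀ β β' (xpt n ℓ u k) = 0 ∧ #(univ.filter fun a => β a < β i₀) < k := by
  obtain ⟨x, hx, h0, hne⟩ := exists_slack_eq_zero_ne hvalid hfacet hβ' i₀ ℓ
  set S := univ.filter fun i => x i ≠ ℓ
  have hS : slack n c β₀ β β' (boxVertex n ℓ u S) = 0 := by
    convert slack_comp_eq_zero hvalid (fun t => if t = ℓ then ℓ else u) (if_pos rfl)
      (if_neg hℓu.ne') (fun t => by split_ifs <;> simp) hx h0 using 2
    funext i
    by_cases hi : x i = ℓ <;> simp [boxVertex, S, hi]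
  refine ⟨#S, card_le_univ S |>.trans_eq (Fintype.card_fin n),
    slack_xpt_card_eq_zero hvalid hℓu hβ hS, not_le.1 fun hcard => ?_⟩
  set U := univ.filter fun a => β a < β i₀
  have hU : ∀ a ∈ U, ∀ b ∉ U, β a < β b := fun a ha b hb => by
    simp only [U, mem_filter, mem_univ, true_and, not_lt] at ha hb
    linarith
  have hi₀ : i₀ ∈ S := by simpa [S] using hne
  have : i₀ ∈ U :=
    (subset_or_subset_of_forall_lt (sum_le_sum_of_slack_boxVertex_eq_zero hvalid hℓu hS) hU).elim
      (fun h => (eq_of_subset_of_card_le h hcard) ▸ hi₀) (· hi₀)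
  simp [U] at this

end Slack

/-- For a core facet, the sets
`{k ∈ {0,…,n-1} : L_k(β₀,β) + β′ m(x^k) = 0}` and `{k ∈ {1,…,n} : L_k(β₀,β) + β′ m(x^k) = 0}`
are nonempty; with `r` the minimum of the first and `s` the maximum of the second,
`β₁ = … = β_{r+1}` and `β_s = … = β_n` (paper indexing `1,…,n`). -/
theorem stmt9 (n : ℕ) (hn : 2 ≤ n) (ℓ u : ℝ) (hlu : ℓ < u) (c : ℕ → ℝ)
    (β₀ : ℝ) (β : Fin n → ℝ) (β' : ℝ)
    (hcore : IsCore n β β') (hvalid : IsValid n ℓ u c β₀ β β')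
    (hfacet : IsFacet n ℓ u c β₀ β β') :
    {k : ℕ | k ≤ n - 1 ∧ Lk n ℓ u β₀ β k + β' * mval n ℓ u c k = 0}.Nonempty ∧
    {k : ℕ | 1 ≤ k ∧ k ≤ n ∧ Lk n ℓ u β₀ β k + β' * mval n ℓ u c k = 0}.Nonempty ∧
    ∀ r s : ℕ,
      IsLeast {k : ℕ | k ≤ n - 1 ∧ Lk n ℓ u β₀ β k + β' * mval n ℓ u c k = 0} r →
      IsGreatest {k : ℕ | 1 ≤ k ∧ k ≤ n ∧ Lk n ℓ u β₀ β k + β' * mval n ℓ u c k = 0} s →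
      (∀ i j : Fin n, (i : ℕ) ≤ r → (j : ℕ) ≤ r → β i = β j) ∧
      (∀ i j : Fin n, s ≤ (i : ℕ) + 1 → s ≤ (j : ℕ) + 1 → β i = β j) := by
  obtain ⟨hβ'', hβ⟩ := hcore
  have hβ' : β' ≠ 0 := by rcases hβ'' with h | h <;> simp [h]
  have lower := exists_slack_xpt_eq_zero_lt_card hvalid hfacet hβ' hlu hβ
  have upper := exists_slack_xpt_eq_zero_card_lt hvalid hfacet hβ' hlu hβ
  let bot : Fin n := ⟨0, by omega⟩
  let top : Fin n := ⟨n - 1, by omega⟩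
  simp only [Lk_add_mul_mval]
  refine ⟨?_, ?_, fun r s hr hs => ⟨?_, ?_⟩⟩
  · obtain ⟨k, hk, hlt⟩ := lower bot
    have := (card_le_univ (univ.filter fun a => β a ≤ β bot)).trans_eq (Fintype.card_fin n)
    exact ⟨k, by omega, hk⟩
  · obtain ⟨k, hkn, hk, hlt⟩ := upper top
    exact ⟨k, by omega, hkn, hk⟩
  · suffices h : ∀ i : Fin n, (i : ℕ) ≤ r → β i = β bot from
      fun i j hi hj => (h i hi).trans (h j hj).symm
    refine fun i hi => (hβ (Fin.le_def.2 (Nat.zero_le i))).lt_or_eq.elim (fun hlt => ?_) Eq.symm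
    obtain ⟨k, hk, hklt⟩ := lower bot
    have := card_filter_le_le_of_lt hβ hlt
    have := hr.2 ⟨by omega, hk⟩
    omega
  · suffices h : ∀ i : Fin n, s ≤ (i : ℕ) + 1 → β i = β top from
      fun i j hi hj => (h i hi).trans (h j hj).symm
    refine fun i hi => (hβ (Fin.le_def.2 (by simp [top]; omega))).lt_or_eq.elim (fun hlt => ?_) id
    obtain ⟨k, hkn, hk, hklt⟩ := upper top
    have := le_card_filter_lt_of_lt hβ hlt
    have := hs.2 ⟨by omega, hkn, hk⟩
    omega
end

section
/- Let P = {(x,w) ∈ ℝ^n × ℝ^{𝒥} : F̂_K(x,w) ≥ 0 for all K ⊆ N} and T = {(x,w) ∈ ℝ^n × ℝ^{𝒥} : x ∈ X′ and w_J = Π_{j∈J} x_j for all J ∈ 𝒥}. Then P = conv(T); moreover P is a polytope with exactly 2^n extreme points, and at each extreme point (x,w) one has x_j ∈ {L_j, U_j} for all j ∈ N and w_J = Π_{j∈J} x_j for all J ∈ 𝒥. -/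
/-!
The polynomials `F_K` are, up to the factor `C = ∏ j, (U j - L j)`, the Lagrange basis for
multilinear interpolation at the corners `v_K` of the box (`v_K j = U j` for `j ∈ K`, `L j`
otherwise): `∑ K, (∏ j ∈ J, v_K j) • F_K = C • ∏ j ∈ J, x j` for every `J`. By uniqueness of
multilinear coefficients this identity is one between the coefficients `γ K J`, so it survives
linearization: the numbers `F̂_K(x, w) / C` are barycentric coordinates with respect to the lifted
corners `(v_K, (∏ j ∈ J, v_K j)_J)`. They are affine, sum to `1`, reconstruct `(x, w)` and vanish
at all lifted corners but one, so `P` is the simplex spanned by these `2 ^ n` points of `T`.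
-/

open Finset

/-- The RLT multilinear polynomial
`F_K(x) = ∏_{j∈K} (x_j − L_j) · ∏_{j∉K} (U_j − x_j)`. -/
noncomputable def FK (n : ℕ) (L U : Fin n → ℝ) (K : Finset (Fin n)) (x : Fin n → ℝ) : ℝ :=
  (∏ j ∈ K, (x j - L j)) * ∏ j ∈ Kᶜ, (U j - x j)

/-- The index set `𝒥 = {J ⊆ N : |J| ≥ 2}` of the linearization variables. -/
def Jidx (n : ℕ) := {J : Finset (Fin n) // 2 ≤ J.card}

/-- The linearization `F̂_K(x,w)` of `F_K`, where `γ K J` is the coefficient of the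
monomial `∏_{j∈J} x_j` in the multilinear expansion of `F_K`, and each monomial with
`|J| ≥ 2` is replaced by the variable `w_J`. -/
noncomputable def FhatK (n : ℕ) (γ : Finset (Fin n) → Finset (Fin n) → ℝ)
    (K : Finset (Fin n)) (x : Fin n → ℝ) (w : Jidx n → ℝ) : ℝ :=
  ∑ J : Finset (Fin n), γ K J * (if h : 2 ≤ J.card then w ⟨J, h⟩ else ∏ j ∈ J, x j)

theorem eq_zero_of_forall_sum_mul_prod_eq_zero {ι R : Type*} [Fintype ι] [CommRing R]
    {c : Finset ι → R} (h : ∀ x : ι → R, ∑ J, c J * ∏ j ∈ J, x j = 0) (J : Finset ι) :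
    c J = 0 := by
  classical
  -- evaluating at the indicator vector of `S` picks out the subsets of `S`
  have hsub : ∀ S : Finset ι, ∑ J ∈ S.powerset, c J = 0 := fun S => by
    have hS := h fun j => if j ∈ S then 1 else 0
    simp only [prod_boole, mul_ite, mul_one, mul_zero, ← sum_filter] at hS
    rw [← hS]
    congr 1
    ext J
    simp [subset_iff]
  induction J using Finset.strongInduction with
  | H S ih =>
    have hS := hsub S
    rwa [← add_sum_erase _ _ (mem_powerset_self S), sum_eq_zero, add_zero] at hS
    intro J hJ
    rw [mem_erase, mem_powerset] at hJ
    exact ih J (hJ.2.ssubset_of_ne hJ.1)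

section BarycentricCoordinates

variable {ι E : Type*} [Fintype ι] [AddCommGroup E] [Module ℝ E]

structure IsBarycentricCoordSystem (coord : ι → E → ℝ) (v : ι → E) : Prop where
  map_combo : ∀ i x y (a b : ℝ), a + b = 1 →
    coord i (a • x + b • y) = a * coord i x + b * coord i y
  sum_eq_one : ∀ x, ∑ i, coord i x = 1
  sum_smul_eq : ∀ x, ∑ i, coord i x • v i = x
  apply_vertex_of_ne : ∀ i j, j ≠ i → coord j (v i) = 0

namespace IsBarycentricCoordSystem

variable {coord : ι → E → ℝ} {v : ι → E}

theorem apply_vertex_self (h : IsBarycentricCoordSystem coord v) (i : ι) : coord i (v i) = 1 := by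
  rw [← h.sum_eq_one (v i), Fintype.sum_eq_single i (h.apply_vertex_of_ne i)]

theorem eq_vertex_of_apply_eq_zero (h : IsBarycentricCoordSystem coord v) {x : E} {i : ι}
    (hx : ∀ j, j ≠ i → coord j x = 0) : x = v i := by
  have hxi : coord i x = 1 := by rw [← h.sum_eq_one x, Fintype.sum_eq_single i hx]
  rw [← h.sum_smul_eq x, Fintype.sum_eq_single i fun j hj => by rw [hx j hj, zero_smul], hxi,
    one_smul]

theorem injective (h : IsBarycentricCoordSystem coord v) : Function.Injective v := by
  intro i j hij
  by_contra hne
  have hi := h.apply_vertex_self i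
  rw [hij, h.apply_vertex_of_ne j i hne] at hi
  exact zero_ne_one hi

theorem convex_setOf_nonneg (h : IsBarycentricCoordSystem coord v) :
    Convex ℝ {x | ∀ i, 0 ≤ coord i x} := by
  intro x hx y hy a b ha hb hab i
  rw [h.map_combo i x y a b hab]
  exact add_nonneg (mul_nonneg ha (hx i)) (mul_nonneg hb (hy i))

theorem setOf_nonneg_eq_convexHull (h : IsBarycentricCoordSystem coord v) :
    {x | ∀ i, 0 ≤ coord i x} = convexHull ℝ (Set.range v) := by
  refine subset_antisymm (fun x hx => ?_) (convexHull_min ?_ h.convex_setOf_nonneg)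
  · have hmem := univ.centerMass_mem_convexHull (fun i _ => hx i) (by simp [h.sum_eq_one])
      (fun i _ => Set.mem_range_self (f := v) i)
    rwa [centerMass_eq_of_sum_1 _ _ (h.sum_eq_one x), h.sum_smul_eq] at hmem
  · rintro _ ⟨i, rfl⟩ j
    rcases eq_or_ne j i with rfl | hji
    · rw [h.apply_vertex_self]
      exact zero_le_one
    · rw [h.apply_vertex_of_ne i j hji]

theorem extremePoints_setOf_nonneg (h : IsBarycentricCoordSystem coord v) :
    Set.extremePoints ℝ {x | ∀ i, 0 ≤ coord i x} = Set.range v := by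
  rw [h.setOf_nonneg_eq_convexHull]
  refine subset_antisymm extremePoints_convexHull_subset ?_
  rintro _ ⟨i, rfl⟩
  rw [← h.setOf_nonneg_eq_convexHull]
  refine ⟨h.setOf_nonneg_eq_convexHull ▸ subset_convexHull ℝ _ (Set.mem_range_self i),
    fun x hx y hy ⟨a, b, ha, hb, hab, hxy⟩ => h.eq_vertex_of_apply_eq_zero fun j hji => ?_⟩
  have hj := h.map_combo j x y a b hab
  rw [hxy, h.apply_vertex_of_ne i j hji] at hj
  nlinarith [mul_nonneg ha.le (hx j), mul_nonneg hb.le (hy j)]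

end IsBarycentricCoordSystem

end BarycentricCoordinates

section RLT

variable {n : ℕ} {L U : Fin n → ℝ} {γ : Finset (Fin n) → Finset (Fin n) → ℝ}

def IsFKExpansion (L U : Fin n → ℝ) (γ : Finset (Fin n) → Finset (Fin n) → ℝ) : Prop :=
  ∀ (K : Finset (Fin n)) (x : Fin n → ℝ), FK n L U K x = ∑ J : Finset (Fin n), γ K J * ∏ j ∈ J, x j

noncomputable def boxCorner (L U : Fin n → ℝ) (K : Finset (Fin n)) : Fin n → ℝ :=
  fun j => if j ∈ K then U j else L j

theorem boxCorner_mem_Icc (hLU : ∀ j, L j ≤ U j) (K : Finset (Fin n)) (j : Fin n) :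
    boxCorner L U K j ∈ Set.Icc (L j) (U j) := by
  unfold boxCorner
  split_ifs
  exacts [⟨hLU j, le_rfl⟩, ⟨le_rfl, hLU j⟩]

theorem boxCorner_eq_or (K : Finset (Fin n)) (j : Fin n) :
    boxCorner L U K j = L j ∨ boxCorner L U K j = U j := by
  unfold boxCorner
  split_ifs <;> simp

theorem FK_nonneg (K : Finset (Fin n)) {x : Fin n → ℝ} (hx : ∀ j, x j ∈ Set.Icc (L j) (U j)) :
    0 ≤ FK n L U K x :=
  mul_nonneg (prod_nonneg fun j _ => sub_nonneg.mpr (hx j).1)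
    (prod_nonneg fun j _ => sub_nonneg.mpr (hx j).2)

theorem FK_boxCorner_of_ne {K K' : Finset (Fin n)} (hne : K' ≠ K) :
    FK n L U K' (boxCorner L U K) = 0 := by
  by_cases hsub : K' ⊆ K
  · obtain ⟨j, hjK, hjK'⟩ := exists_of_ssubset (hsub.ssubset_of_ne hne)
    exact mul_eq_zero_of_right _ (prod_eq_zero (mem_compl.mpr hjK') (by simp [boxCorner, hjK]))
  · obtain ⟨j, hjK', hjK⟩ := not_subset.mp hsub
    exact mul_eq_zero_of_left (prod_eq_zero hjK' (by simp [boxCorner, hjK])) _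

theorem sum_prod_boxCorner_mul_FK (L U : Fin n → ℝ) (J₀ : Finset (Fin n)) (x : Fin n → ℝ) :
    ∑ K, (∏ j ∈ J₀, boxCorner L U K j) * FK n L U K x = (∏ j, (U j - L j)) * ∏ j ∈ J₀, x j := by
  set f : Fin n → ℝ → ℝ := fun j t => if j ∈ J₀ then t else 1
  have hcorner : ∀ K, ∏ j ∈ J₀, boxCorner L U K j
      = (∏ j ∈ K, f j (U j)) * ∏ j ∈ Kᶜ, f j (L j) := fun K => by
    rw [← univ_inter J₀, ← prod_ite_mem, ← prod_mul_prod_compl K]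
    congr 1 <;> refine prod_congr rfl fun j hj => ?_
    · simp [boxCorner, f, hj]
    · simp [boxCorner, f, mem_compl.mp hj]
  calc ∑ K, (∏ j ∈ J₀, boxCorner L U K j) * FK n L U K x
      = ∑ K, (∏ j ∈ K, (x j - L j) * f j (U j)) * ∏ j ∈ Kᶜ, (U j - x j) * f j (L j) :=
        sum_congr rfl fun K _ => by rw [hcorner, FK, prod_mul_distrib, prod_mul_distrib]; ring
    _ = ∏ j, ((x j - L j) * f j (U j) + (U j - x j) * f j (L j)) := (Fintype.prod_add _ _).symm
    _ = ∏ j, (U j - L j) * f j (x j) :=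
        prod_congr rfl fun j _ => by simp only [f]; split_ifs <;> ring
    _ = (∏ j, (U j - L j)) * ∏ j ∈ J₀, x j := by rw [prod_mul_distrib, prod_ite_mem, univ_inter]

theorem IsFKExpansion.sum_mul_prod_boxCorner (hγ : IsFKExpansion L U γ) (J J₀ : Finset (Fin n)) :
    ∑ K, γ K J * ∏ j ∈ J₀, boxCorner L U K j = if J = J₀ then ∏ j, (U j - L j) else 0 := by
  rw [← sub_eq_zero]
  revert J
  refine eq_zero_of_forall_sum_mul_prod_eq_zero fun x => ?_
  simp only [sub_mul, sum_sub_distrib, ite_mul, zero_mul, sum_ite_eq', mem_univ, if_true,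
    sum_mul]
  rw [sum_comm, ← sum_prod_boxCorner_mul_FK L U J₀ x, sub_eq_zero]
  refine sum_congr rfl fun K _ => ?_
  rw [hγ, mul_sum]
  exact sum_congr rfl fun J _ => by ring

noncomputable def linMonomial (J : Finset (Fin n)) (p : (Fin n → ℝ) × (Jidx n → ℝ)) : ℝ :=
  if h : 2 ≤ J.card then p.2 ⟨J, h⟩ else ∏ j ∈ J, p.1 j

theorem FhatK_eq_sum_linMonomial (K : Finset (Fin n)) (p : (Fin n → ℝ) × (Jidx n → ℝ)) :
    FhatK n γ K p.1 p.2 = ∑ J, γ K J * linMonomial J p :=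
  rfl

theorem linMonomial_empty (p : (Fin n → ℝ) × (Jidx n → ℝ)) : linMonomial ∅ p = 1 := by
  simp [linMonomial]

theorem linMonomial_eq_prod {p : (Fin n → ℝ) × (Jidx n → ℝ)}
    (hp : ∀ J : Jidx n, p.2 J = ∏ j ∈ J.1, p.1 j) (J : Finset (Fin n)) :
    linMonomial J p = ∏ j ∈ J, p.1 j := by
  unfold linMonomial
  split_ifs with h
  exacts [hp ⟨J, h⟩, rfl]

theorem linMonomial_combo (J : Finset (Fin n)) (p q : (Fin n → ℝ) × (Jidx n → ℝ)) {a b : ℝ}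
    (hab : a + b = 1) :
    linMonomial J (a • p + b • q) = a * linMonomial J p + b * linMonomial J q := by
  unfold linMonomial
  split_ifs with h
  · rfl
  -- a monomial of degree at most one is affine
  obtain hJ | hJ := Nat.le_one_iff_eq_zero_or_eq_one.mp (Nat.le_of_lt_succ (not_le.mp h))
  · simp [card_eq_zero.mp hJ, hab]
  · obtain ⟨j, rfl⟩ := card_eq_one.mp hJ
    simp

theorem FhatK_combo (K : Finset (Fin n)) (p q : (Fin n → ℝ) × (Jidx n → ℝ)) {a b : ℝ}
    (hab : a + b = 1) :
    FhatK n γ K (a • p + b • q).1 (a • p + b • q).2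
      = a * FhatK n γ K p.1 p.2 + b * FhatK n γ K q.1 q.2 := by
  simp only [FhatK_eq_sum_linMonomial, linMonomial_combo _ _ _ hab, mul_sum, ← sum_add_distrib]
  exact sum_congr rfl fun J _ => by ring

theorem IsFKExpansion.FhatK_eq_FK (hγ : IsFKExpansion L U γ) (K : Finset (Fin n))
    {p : (Fin n → ℝ) × (Jidx n → ℝ)} (hp : ∀ J : Jidx n, p.2 J = ∏ j ∈ J.1, p.1 j) :
    FhatK n γ K p.1 p.2 = FK n L U K p.1 := by
  rw [FhatK_eq_sum_linMonomial, hγ]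
  simp only [linMonomial_eq_prod hp]

theorem IsFKExpansion.sum_FhatK_mul_prod_boxCorner (hγ : IsFKExpansion L U γ)
    (p : (Fin n → ℝ) × (Jidx n → ℝ)) (J₀ : Finset (Fin n)) :
    ∑ K, FhatK n γ K p.1 p.2 * ∏ j ∈ J₀, boxCorner L U K j
      = (∏ j, (U j - L j)) * linMonomial J₀ p := by
  simp only [FhatK_eq_sum_linMonomial, sum_mul]
  rw [sum_comm]
  simp only [mul_right_comm _ (linMonomial _ p), ← sum_mul, hγ.sum_mul_prod_boxCorner,
    ite_mul, zero_mul, sum_ite_eq', mem_univ, if_true]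

def monomialLift (x : Fin n → ℝ) : (Fin n → ℝ) × (Jidx n → ℝ) :=
  (x, fun J => ∏ j ∈ J.1, x j)

theorem IsFKExpansion.sum_FhatK_smul_monomialLift_boxCorner (hγ : IsFKExpansion L U γ)
    (p : (Fin n → ℝ) × (Jidx n → ℝ)) :
    ∑ K, FhatK n γ K p.1 p.2 • monomialLift (boxCorner L U K) = (∏ j, (U j - L j)) • p := by
  ext j
  · simpa [monomialLift, linMonomial, Prod.fst_sum, Finset.sum_apply] using
      hγ.sum_FhatK_mul_prod_boxCorner p {j}
  · have h := hγ.sum_FhatK_mul_prod_boxCorner p j.1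
    rw [linMonomial, dif_pos j.2] at h
    simp only [monomialLift, Prod.snd_sum, Finset.sum_apply, Prod.smul_snd, Pi.smul_apply,
      smul_eq_mul]
    exact h

theorem prod_sub_pos (hLU : ∀ j, L j < U j) : 0 < ∏ j, (U j - L j) :=
  prod_pos fun j _ => sub_pos.mpr (hLU j)

noncomputable def rltCoord (L U : Fin n → ℝ) (γ : Finset (Fin n) → Finset (Fin n) → ℝ)
    (K : Finset (Fin n)) (p : (Fin n → ℝ) × (Jidx n → ℝ)) : ℝ :=
  FhatK n γ K p.1 p.2 / ∏ j, (U j - L j)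

theorem setOf_forall_FhatK_nonneg (hLU : ∀ j, L j < U j) :
    {p : (Fin n → ℝ) × (Jidx n → ℝ) | ∀ K, 0 ≤ FhatK n γ K p.1 p.2}
      = {p | ∀ K, 0 ≤ rltCoord L U γ K p} := by
  ext p
  exact forall_congr' fun K => by rw [rltCoord, le_div_iff₀ (prod_sub_pos hLU), zero_mul]

theorem IsFKExpansion.isBarycentricCoordSystem (hγ : IsFKExpansion L U γ)
    (hLU : ∀ j, L j < U j) :
    IsBarycentricCoordSystem (rltCoord L U γ) fun K => monomialLift (boxCorner L U K) where
  map_combo K p q a b hab := by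
    simp only [rltCoord, FhatK_combo K p q hab]
    ring
  sum_eq_one p := by
    have h := hγ.sum_FhatK_mul_prod_boxCorner p ∅
    simp only [prod_empty, mul_one, linMonomial_empty] at h
    simp only [rltCoord, ← sum_div, h, div_self (prod_sub_pos hLU).ne']
  sum_smul_eq p := by
    simp only [rltCoord, div_eq_inv_mul, mul_smul, ← smul_sum,
      hγ.sum_FhatK_smul_monomialLift_boxCorner, inv_smul_smul₀ (prod_sub_pos hLU).ne']
  apply_vertex_of_ne K K' hne := by
    rw [rltCoord, hγ.FhatK_eq_FK K' fun _ => rfl]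
    exact div_eq_zero_iff.mpr (Or.inl (FK_boxCorner_of_ne hne))

end RLT

theorem stmt10_general (n : ℕ) (L U : Fin n → ℝ) (hLU : ∀ j, L j < U j)
    (γ : Finset (Fin n) → Finset (Fin n) → ℝ)
    (hγ : ∀ (K : Finset (Fin n)) (x : Fin n → ℝ),
      FK n L U K x = ∑ J : Finset (Fin n), γ K J * ∏ j ∈ J, x j)
    (P T : Set ((Fin n → ℝ) × (Jidx n → ℝ)))
    (hP : P = {p | ∀ K : Finset (Fin n), 0 ≤ FhatK n γ K p.1 p.2})
    (hT : T = {p | (∀ j, p.1 j ∈ Set.Icc (L j) (U j)) ∧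
                   ∀ J : Jidx n, p.2 J = ∏ j ∈ J.1, p.1 j}) :
    P = convexHull ℝ T ∧
    P = convexHull ℝ (Set.extremePoints ℝ P) ∧
    (Set.extremePoints ℝ P).Finite ∧
    (Set.extremePoints ℝ P).ncard = 2 ^ n ∧
    ∀ p ∈ Set.extremePoints ℝ P,
      (∀ j, p.1 j = L j ∨ p.1 j = U j) ∧
      ∀ J : Jidx n, p.2 J = ∏ j ∈ J.1, p.1 j := by
  have hbary := IsFKExpansion.isBarycentricCoordSystem hγ hLU
  have hcoord : P = {p | ∀ K, 0 ≤ rltCoord L U γ K p} := hP.trans (setOf_forall_FhatK_nonneg hLU)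
  have hhull := hcoord.trans hbary.setOf_nonneg_eq_convexHull
  have hext := hcoord ▸ hbary.extremePoints_setOf_nonneg
  have hcornerT : (Set.range fun K => monomialLift (boxCorner L U K)) ⊆ T := by
    rintro _ ⟨K, rfl⟩
    exact hT ▸ ⟨boxCorner_mem_Icc (fun j => (hLU j).le) K, fun _ => rfl⟩
  have hTP : T ⊆ P := fun p hp => by
    rw [hT] at hp
    exact hP ▸ fun K => IsFKExpansion.FhatK_eq_FK hγ K hp.2 ▸ FK_nonneg K hp.1
  refine ⟨(hhull.trans_subset (convexHull_mono hcornerT)).antisymm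
      (convexHull_min hTP (hhull ▸ convex_convexHull ℝ _)), hext ▸ hhull,
    hext ▸ Set.finite_range _, ?_, ?_⟩
  · rw [hext, Set.ncard_range_of_injective hbary.injective, Nat.card_eq_fintype_card,
      Fintype.card_finset, Fintype.card_fin]
  · rw [hext]
    rintro _ ⟨K, rfl⟩
    exact ⟨boxCorner_eq_or K, fun _ => rfl⟩

/-- `P = conv(T)`; moreover `P` is a polytope with exactly `2^n`
extreme points, and at each extreme point `(x,w)` one has `x_j ∈ {L_j,U_j}` for all `j`
and `w_J = ∏_{j∈J} x_j` for all `J ∈ 𝒥`. -/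
theorem stmt10 (n : ℕ) (hn : 1 ≤ n) (L U : Fin n → ℝ) (hLU : ∀ j, L j < U j)
    (γ : Finset (Fin n) → Finset (Fin n) → ℝ)
    (hγ : ∀ (K : Finset (Fin n)) (x : Fin n → ℝ),
      FK n L U K x = ∑ J : Finset (Fin n), γ K J * ∏ j ∈ J, x j)
    (P T : Set ((Fin n → ℝ) × (Jidx n → ℝ)))
    (hP : P = {p | ∀ K : Finset (Fin n), 0 ≤ FhatK n γ K p.1 p.2})
    (hT : T = {p | (∀ j, p.1 j ∈ Set.Icc (L j) (U j)) ∧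
                   ∀ J : Jidx n, p.2 J = ∏ j ∈ J.1, p.1 j}) :
    P = convexHull ℝ T ∧
    P = convexHull ℝ (Set.extremePoints ℝ P) ∧
    (Set.extremePoints ℝ P).Finite ∧
    (Set.extremePoints ℝ P).ncard = 2 ^ n ∧
    ∀ p ∈ Set.extremePoints ℝ P,
      (∀ j, p.1 j = L j ∨ p.1 j = U j) ∧
      ∀ J : Jidx n, p.2 J = ∏ j ∈ J.1, p.1 j :=
  stmt10_general n L U hLU γ hγ P T hP hT
end

section
/- For every multilinear polynomial p(x) = Σ_{J⊆N} α_J Π_{j∈J} x_j there exists a unique family of reals (π_K)_{K⊆N} such that p(x) = Σ_{K⊆N} π_K F_K(x) for all x ∈ ℝ^n; moreover, for each K ⊆ N, π_K = p(x̂^K) / F_K(x̂^K), where x̂^K is the vertex of X′ with x̂^K_j = U_j for j ∈ K and x̂^K_j = L_j for j ∉ K. -/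
/-!
Evaluating at the vertices of the box diagonalises the family `F_K`: `F_K(x̂^{K'})` vanishes
for `K ≠ K'` and equals `∏_j (U_j − L_j) ≠ 0` for `K = K'`, which forces the coefficients and
gives uniqueness. For existence, a product of functions each affine in its own coordinate is
interpolated exactly from its vertex values: expand `∏_j ((x_j − L_j) g_j(U_j) + (U_j − x_j) g_j(L_j))`
over the subsets `K` of coordinates where the first summand is chosen. Monomials are such
products, and the representation is linear in `p`.
-/

open Finset

/-- A general multilinear polynomial `p(x) = ∑_{J⊆N} α_J ∏_{j∈J} x_j`. -/
noncomputable def pPoly (n : ℕ) (α : Finset (Fin n) → ℝ) (x : Fin n → ℝ) : ℝ :=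
  ∑ J : Finset (Fin n), α J * ∏ j ∈ J, x j

/-- The vertex `x̂^K` of the box, with `x̂^K_j = U_j` for `j ∈ K` and `x̂^K_j = L_j` else. -/
def vertK (n : ℕ) (L U : Fin n → ℝ) (K : Finset (Fin n)) : Fin n → ℝ :=
  fun j => if j ∈ K then U j else L j

section Interpolation

variable {n : ℕ} {L U : Fin n → ℝ}

lemma FK_vertK_self (K : Finset (Fin n)) :
    FK n L U K (vertK n L U K) = ∏ j, (U j - L j) := by
  rw [FK, ← prod_mul_prod_compl K]
  congr 1
  · exact prod_congr rfl fun j hj => by simp [vertK, hj]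
  · exact prod_congr rfl fun j hj => by simp [vertK, mem_compl.mp hj]

lemma FK_vertK_self_ne_zero (hLU : ∀ j, L j ≠ U j) (K : Finset (Fin n)) :
    FK n L U K (vertK n L U K) ≠ 0 := by
  rw [FK_vertK_self]
  exact prod_ne_zero_iff.mpr fun j _ => sub_ne_zero.mpr (hLU j).symm

lemma FK_vertK_of_ne {K K' : Finset (Fin n)} (h : K ≠ K') :
    FK n L U K (vertK n L U K') = 0 := by
  by_cases hKK' : K ⊆ K'
  · obtain ⟨j, hjK', hjK⟩ := not_subset.mp fun hK'K => h (hKK'.antisymm hK'K)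
    exact mul_eq_zero_of_right _ (prod_eq_zero (mem_compl.mpr hjK) (by simp [vertK, hjK']))
  · obtain ⟨j, hjK, hjK'⟩ := not_subset.mp hKK'
    exact mul_eq_zero_of_left (prod_eq_zero hjK (by simp [vertK, hjK'])) _

lemma prod_mul_prod_sub_eq_sum_FK (g : Fin n → ℝ → ℝ)
    (hg : ∀ j t, g j t * (U j - L j) = (t - L j) * g j (U j) + (U j - t) * g j (L j))
    (x : Fin n → ℝ) :
    (∏ j, g j (x j)) * ∏ j, (U j - L j)
      = ∑ K : Finset (Fin n), (∏ j, g j (vertK n L U K j)) * FK n L U K x := by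
  rw [← prod_mul_distrib, prod_congr rfl fun j _ => hg j (x j), prod_add, powerset_univ]
  refine sum_congr rfl fun K _ => ?_
  have hvert : ∏ j, g j (vertK n L U K j) = (∏ j ∈ K, g j (U j)) * ∏ j ∈ Kᶜ, g j (L j) := by
    rw [← prod_mul_prod_compl K]
    congr 1
    · exact prod_congr rfl fun j hj => by simp [vertK, hj]
    · exact prod_congr rfl fun j hj => by simp [vertK, mem_compl.mp hj]
  rw [hvert, FK, ← compl_eq_univ_sdiff, prod_mul_distrib, prod_mul_distrib]
  ring

lemma prod_mul_prod_sub_eq_sum_FK_monomial (J : Finset (Fin n)) (x : Fin n → ℝ) :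
    (∏ j ∈ J, x j) * ∏ j, (U j - L j)
      = ∑ K : Finset (Fin n), (∏ j ∈ J, vertK n L U K j) * FK n L U K x := by
  have hmonomial : ∀ y : Fin n → ℝ, ∏ j ∈ J, y j = ∏ j, if j ∈ J then y j else 1 := fun y => by
    rw [prod_ite_mem, univ_inter]
  simp only [hmonomial]
  exact prod_mul_prod_sub_eq_sum_FK (fun j t => if j ∈ J then t else 1)
    (fun j t => by split_ifs <;> ring) x

lemma pPoly_mul_prod_sub_eq_sum_FK (α : Finset (Fin n) → ℝ) (x : Fin n → ℝ) :
    pPoly n α x * ∏ j, (U j - L j)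
      = ∑ K : Finset (Fin n), pPoly n α (vertK n L U K) * FK n L U K x := by
  simp only [pPoly, sum_mul, mul_assoc, prod_mul_prod_sub_eq_sum_FK_monomial, mul_sum]
  rw [sum_comm]

lemma pPoly_eq_sum_FK (hLU : ∀ j, L j ≠ U j) (α : Finset (Fin n) → ℝ) (x : Fin n → ℝ) :
    pPoly n α x = ∑ K : Finset (Fin n),
      pPoly n α (vertK n L U K) / FK n L U K (vertK n L U K) * FK n L U K x := by
  have hc := FK_vertK_self_ne_zero hLU ∅
  rw [FK_vertK_self] at hc
  simp only [FK_vertK_self, div_mul_eq_mul_div, ← sum_div]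
  rw [eq_div_iff hc, pPoly_mul_prod_sub_eq_sum_FK]

lemma eq_div_of_forall_eq_sum_FK (hLU : ∀ j, L j ≠ U j) {f : (Fin n → ℝ) → ℝ}
    {π : Finset (Fin n) → ℝ} (hf : ∀ x, f x = ∑ K : Finset (Fin n), π K * FK n L U K x)
    (K : Finset (Fin n)) :
    π K = f (vertK n L U K) / FK n L U K (vertK n L U K) := by
  rw [hf, sum_eq_single K (fun K' _ hK' => by rw [FK_vertK_of_ne hK', mul_zero]) (by simp),
    mul_div_cancel_right₀ _ (FK_vertK_self_ne_zero hLU K)]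

end Interpolation

theorem stmt11_general (n : ℕ) (L U : Fin n → ℝ) (hLU : ∀ j, L j < U j)
    (α : Finset (Fin n) → ℝ) :
    (∃! π : Finset (Fin n) → ℝ,
      ∀ x, pPoly n α x = ∑ K : Finset (Fin n), π K * FK n L U K x) ∧
    ∀ π : Finset (Fin n) → ℝ,
      (∀ x, pPoly n α x = ∑ K : Finset (Fin n), π K * FK n L U K x) →
      ∀ K, π K = pPoly n α (vertK n L U K) / FK n L U K (vertK n L U K) := by
  have hLU' : ∀ j, L j ≠ U j := fun j => (hLU j).ne
  exact ⟨⟨_, pPoly_eq_sum_FK hLU' α, fun π hπ => funext (eq_div_of_forall_eq_sum_FK hLU' hπ)⟩,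
    fun π hπ => eq_div_of_forall_eq_sum_FK hLU' hπ⟩

/-- Every multilinear polynomial `p` has a unique representation
`p = ∑_K π_K F_K`, and the multipliers are `π_K = p(x̂^K) / F_K(x̂^K)`. -/
theorem stmt11 (n : ℕ) (hn : 1 ≤ n) (L U : Fin n → ℝ) (hLU : ∀ j, L j < U j)
    (α : Finset (Fin n) → ℝ) :
    (∃! π : Finset (Fin n) → ℝ,
      ∀ x, pPoly n α x = ∑ K : Finset (Fin n), π K * FK n L U K x) ∧
    ∀ π : Finset (Fin n) → ℝ,
      (∀ x, pPoly n α x = ∑ K : Finset (Fin n), π K * FK n L U K x) →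
      ∀ K, π K = pPoly n α (vertK n L U K) / FK n L U K (vertK n L U K) :=
  stmt11_general n L U hLU α
end

section
/- If ℓ ≥ 0 and c_j ≥ 0 for all j ∈ {2,…,n}, then m is supermodular over the vertices of X, i.e., m(x^k) − m(x^{k−1}) ≤ m(x^{k+1}) − m(x^k) for all k ∈ {1,…,n−1}. -/
open Finset

/-- `m` is supermodular over the vertices of `X`:
`m(x^k) − m(x^{k−1}) ≤ m(x^{k+1}) − m(x^k)` for `k ∈ {1,…,n−1}`. -/
def Supermod (n : ℕ) (ℓ u : ℝ) (c : ℕ → ℝ) : Prop :=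
  ∀ k, 1 ≤ k → k ≤ n - 1 →
    mval n ℓ u c k - mval n ℓ u c (k - 1) ≤ mval n ℓ u c (k + 1) - mval n ℓ u c k

/-!
The coordinates of `x^{k-1}`, `x^k`, `x^{k+1}` agree outside positions `k` and `k+1`, where they
read `(ℓ, ℓ)`, `(u, ℓ)`, `(u, u)`. Since `m` is symmetric and affine in each variable, the second
difference `m(x^{k+1}) − 2 m(x^k) + m(x^{k−1})` is `(u − ℓ)²` times the mixed coefficient
`∑_i c_i e_{i−2}` of the remaining `n − 2` coordinates, which is nonnegative when `c ≥ 0` and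
`0 ≤ ℓ < u`.
-/

namespace Multiset

variable {R : Type*}

theorem esymm_cons_succ [CommSemiring R] (a : R) (s : Multiset R) (i : ℕ) :
    (a ::ₘ s).esymm (i + 1) = s.esymm (i + 1) + a * s.esymm i := by
  simp only [esymm, powersetCard_cons, map_add, map_map, Function.comp_def, prod_cons, sum_add,
    sum_map_mul_left]

theorem esymm_nonneg [CommSemiring R] [PartialOrder R] [IsOrderedRing R] {s : Multiset R}
    (hs : ∀ x ∈ s, 0 ≤ x) (i : ℕ) : 0 ≤ s.esymm i :=
  sum_nonneg fun _ hy ↦ by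
    obtain ⟨t, ht, rfl⟩ := mem_map.mp hy
    exact prod_nonneg fun x hx ↦ hs x (mem_of_le (mem_powersetCard.mp ht).1 hx)

theorem esymm_cons_cons_second_diff [CommRing R] (a b : R) (s : Multiset R) (i : ℕ) :
    (a ::ₘ a ::ₘ s).esymm (i + 2) - 2 * (a ::ₘ b ::ₘ s).esymm (i + 2)
      + (b ::ₘ b ::ₘ s).esymm (i + 2) = (a - b) ^ 2 * s.esymm i := by
  simp only [esymm_cons_succ]
  ring

end Multiset

noncomputable def mSymm (n : ℕ) (c : ℕ → ℝ) (s : Multiset ℝ) : ℝ :=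
  ∑ i ∈ Icc 2 n, c i * s.esymm i

theorem mSymm_midpoint_le (n : ℕ) (c : ℕ → ℝ) (hc : ∀ j, 2 ≤ j → j ≤ n → 0 ≤ c j)
    (a b : ℝ) {s : Multiset ℝ} (hs : ∀ x ∈ s, 0 ≤ x) :
    2 * mSymm n c (a ::ₘ b ::ₘ s) ≤ mSymm n c (a ::ₘ a ::ₘ s) + mSymm n c (b ::ₘ b ::ₘ s) := by
  simp only [mSymm, mul_sum, ← sum_add_distrib]
  refine sum_le_sum fun i hi ↦ ?_
  obtain ⟨hi₂, hin⟩ := mem_Icc.mp hi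
  obtain ⟨j, rfl⟩ : ∃ j, i = j + 2 := ⟨i - 2, by omega⟩
  have h := mul_nonneg (hc (j + 2) hi₂ hin)
    (mul_nonneg (sq_nonneg (a - b)) (Multiset.esymm_nonneg hs j))
  rw [← Multiset.esymm_cons_cons_second_diff] at h
  linear_combination h

theorem mPoly_eq_mSymm (n : ℕ) (c : ℕ → ℝ) (x : Fin n → ℝ) :
    mPoly n c x = mSymm n c (univ.val.map x) := by
  simp only [mPoly, mSymm, Finset.esymm_map_val]

theorem univ_val_map_xpt (n : ℕ) (ℓ u : ℝ) {k : ℕ} (hk : k ≤ n) :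
    (univ : Finset (Fin n)).val.map (xpt n ℓ u k) =
      Multiset.replicate k u + Multiset.replicate (n - k) ℓ := by
  have hlt : #{j : Fin n | (j : ℕ) < k} = k := by rw [Fin.card_filter_val_lt]; omega
  have hge : #{j : Fin n | ¬(j : ℕ) < k} = n - k := by
    have := card_filter_add_card_filter_not (s := univ) (fun j : Fin n ↦ (j : ℕ) < k)
    rw [card_univ, Fintype.card_fin] at this
    omega
  rw [← Multiset.filter_add_not (fun j : Fin n ↦ (j : ℕ) < k) univ.val, Multiset.map_add]
  congr 1 <;> refine Multiset.eq_replicate.mpr ⟨?_, ?_⟩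
  · rw [Multiset.card_map, ← Finset.filter_val, Finset.card_val, hlt]
  · rintro _ hx
    obtain ⟨j, hj, rfl⟩ := Multiset.mem_map.mp hx
    exact if_pos (Multiset.of_mem_filter hj)
  · rw [Multiset.card_map, ← Finset.filter_val, Finset.card_val, hge]
  · rintro _ hx
    obtain ⟨j, hj, rfl⟩ := Multiset.mem_map.mp hx
    exact if_neg (Multiset.of_mem_filter (p := fun j : Fin n ↦ ¬(j : ℕ) < k) hj)

theorem mval_eq_mSymm (n : ℕ) (ℓ u : ℝ) (c : ℕ → ℝ) {k : ℕ} (hk : k ≤ n) :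
    mval n ℓ u c k = mSymm n c (Multiset.replicate k u + Multiset.replicate (n - k) ℓ) := by
  rw [mval, mPoly_eq_mSymm, univ_val_map_xpt n ℓ u hk]

theorem stmt17_general (n : ℕ) (ℓ u : ℝ) (hlu : ℓ < u) (c : ℕ → ℝ)
    (hl : 0 ≤ ℓ) (hc : ∀ j, 2 ≤ j → j ≤ n → 0 ≤ c j) :
    Supermod n ℓ u c := by
  intro k hk₁ hkn
  obtain ⟨p, rfl⟩ : ∃ p, k = p + 1 := ⟨k - 1, by omega⟩
  obtain ⟨q, rfl⟩ : ∃ q, n = p + q + 2 := ⟨n - p - 2, by omega⟩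
  set T := Multiset.replicate p u + Multiset.replicate q ℓ
  have hT : ∀ x ∈ T, 0 ≤ x := by
    simp only [T, Multiset.mem_add, Multiset.mem_replicate]
    rintro x (⟨-, rfl⟩ | ⟨-, rfl⟩) <;> linarith
  have hℓℓ : mval (p + q + 2) ℓ u c (p + 1 - 1) = mSymm (p + q + 2) c (ℓ ::ₘ ℓ ::ₘ T) := by
    rw [mval_eq_mSymm _ _ _ _ (by omega), show p + q + 2 - (p + 1 - 1) = q + 2 by omega]
    simp [T, Multiset.replicate_succ]
  have huℓ : mval (p + q + 2) ℓ u c (p + 1) = mSymm (p + q + 2) c (u ::ₘ ℓ ::ₘ T) := by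
    rw [mval_eq_mSymm _ _ _ _ (by omega), show p + q + 2 - (p + 1) = q + 1 by omega]
    simp [T, Multiset.replicate_succ, Multiset.cons_swap]
  have huu : mval (p + q + 2) ℓ u c (p + 1 + 1) = mSymm (p + q + 2) c (u ::ₘ u ::ₘ T) := by
    rw [mval_eq_mSymm _ _ _ _ (by omega), show p + q + 2 - (p + 1 + 1) = q by omega]
    simp [T, Multiset.replicate_succ]
  rw [hℓℓ, huℓ, huu]
  linarith [mSymm_midpoint_le (p + q + 2) c hc u ℓ hT]

/-- If `ℓ ≥ 0` and all coefficients `c_j ≥ 0` for `j ∈ {2,…,n}`, then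
`m` is supermodular over the vertices of `X`. -/
theorem stmt17 (n : ℕ) (hn : 2 ≤ n) (ℓ u : ℝ) (hlu : ℓ < u) (c : ℕ → ℝ)
    (hl : 0 ≤ ℓ) (hc : ∀ j, 2 ≤ j → j ≤ n → 0 ≤ c j) :
    Supermod n ℓ u c :=
  stmt17_general n ℓ u hlu c hl hc
end

section
/- Suppose ℓ = 0 and u = 1 (so X = [0,1]^n). Then m is supermodular over the vertices of X if and only if Σ_{d=2}^{k+1} binom(k−1, d−2) · c_d ≥ 0 for every k ∈ {1,…,n−1} (with the convention binom(0,0) = 1). -/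
open Finset

/-!
At the vertex `x^k` of the unit cube a monomial `∏_{j∈J} x_j` is `1` exactly when `J ⊆ {1,…,k}`,
so `m(x^k) = ∑_i c_i C(k,i)`. Applying Pascal's rule twice, the second difference of
`k ↦ C(k,i)` at `k - 1` is `C(k-1, i-2)`, so the supermodularity inequality at `k` says precisely
that `∑_d C(k-1, d-2) c_d ≥ 0`.
-/

theorem Finset.sum_powersetCard_prod_boole {α R : Type*} [CommSemiring R] (s : Finset α)
    (p : α → Prop) [DecidablePred p] (i : ℕ) :
    ∑ J ∈ s.powersetCard i, ∏ j ∈ J, (if p j then (1 : R) else 0) =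
      ((#(s.filter p)).choose i : R) := by
  have hfilter : (s.powersetCard i).filter (fun J => ∀ j ∈ J, p j) =
      (s.filter p).powersetCard i := by
    ext J
    simp only [mem_filter, mem_powersetCard, subset_iff]
    grind
  simp_rw [prod_boole, sum_boole, hfilter, card_powersetCard]

theorem mval_zero_one (n : ℕ) (c : ℕ → ℝ) {k : ℕ} (hk : k ≤ n) :
    mval n 0 1 c k = ∑ i ∈ Icc 2 n, c i * (k.choose i : ℝ) := by
  simp only [mval, mPoly, xpt, sum_powersetCard_prod_boole, Fin.card_filter_val_lt,
    min_eq_right hk]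

theorem Nat.choose_add_two_add_choose (m d : ℕ) :
    (m + 2).choose (d + 2) + m.choose (d + 2) = 2 * (m + 1).choose (d + 2) + m.choose d := by
  simp only [Nat.choose_succ_succ (m + 1), Nat.choose_succ_succ m]
  ring

theorem mval_zero_one_second_difference (n : ℕ) (c : ℕ → ℝ) {m : ℕ} (hm : m + 2 ≤ n) :
    mval n 0 1 c (m + 2) - mval n 0 1 c (m + 1) - (mval n 0 1 c (m + 1) - mval n 0 1 c m) =
      ∑ d ∈ Icc 2 (m + 2), (m.choose (d - 2) : ℝ) * c d := by
  have htruncate : ∑ d ∈ Icc 2 (m + 2), (m.choose (d - 2) : ℝ) * c d =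
      ∑ d ∈ Icc 2 n, (m.choose (d - 2) : ℝ) * c d := by
    refine sum_subset (Icc_subset_Icc_right hm) fun d hd hd' => ?_
    simp only [mem_Icc, not_and, not_le] at hd hd'
    rw [Nat.choose_eq_zero_of_lt (by omega), Nat.cast_zero, zero_mul]
  rw [htruncate, mval_zero_one n c hm, mval_zero_one n c (by omega),
    mval_zero_one n c (by omega), ← sum_sub_distrib, ← sum_sub_distrib, ← sum_sub_distrib]
  refine sum_congr rfl fun i hi => ?_
  obtain ⟨d, rfl⟩ : ∃ d, i = d + 2 := ⟨i - 2, by simp only [mem_Icc] at hi; omega⟩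
  have hpascal := congrArg (Nat.cast : ℕ → ℝ) (Nat.choose_add_two_add_choose m d)
  push_cast at hpascal
  rw [Nat.add_sub_cancel]
  linear_combination c (d + 2) * hpascal

theorem stmt18_general (n : ℕ) (ℓ u : ℝ) (c : ℕ → ℝ)
    (hℓ : ℓ = 0) (hu : u = 1) :
    Supermod n ℓ u c ↔
      ∀ k, 1 ≤ k → k ≤ n - 1 →
        0 ≤ ∑ d ∈ Finset.Icc 2 (k + 1), ((k - 1).choose (d - 2) : ℝ) * c d := by
  subst hℓ hu
  refine forall₃_congr fun k hk hkn => ?_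
  obtain ⟨m, rfl⟩ : ∃ m, k = m + 1 := ⟨k - 1, by omega⟩
  rw [← sub_nonneg, Nat.add_sub_cancel, ← mval_zero_one_second_difference n c (by omega)]

/-- Over the unit hypercube (`ℓ = 0`, `u = 1`), `m` is supermodular
over the vertices of `X` iff `∑_{d=2}^{k+1} C(k−1, d−2) c_d ≥ 0` for all
`k ∈ {1,…,n−1}`. -/
theorem stmt18 (n : ℕ) (hn : 2 ≤ n) (ℓ u : ℝ) (hlu : ℓ < u) (c : ℕ → ℝ)
    (hℓ : ℓ = 0) (hu : u = 1) :
    Supermod n ℓ u c ↔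
      ∀ k, 1 ≤ k → k ≤ n - 1 →
        0 ≤ ∑ d ∈ Finset.Icc 2 (k + 1), ((k - 1).choose (d - 2) : ℝ) * c d :=
  stmt18_general n ℓ u c hℓ hu
end
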